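/- Suppose I is a stretched m-primary ideal. Then α_1 = ℓ_A((I^2+Q)/Q) = n_I − 1. -/

import Mathlib

open Polynomial IsLocalRing

set_option synthInstance.maxHeartbeats 1000000
set_option maxHeartbeats 1000000

noncomputable section

/-- The length `ℓ_A(M)` of an `A`-module `M`, defined as the Krull dimension of its
lattice of submodules. -/
def moduleLength (A : Type*) [CommRing A] (M : Type*) [AddCommGroup M] [Module A M] : ℕ∞ :=
  (Order.krullDim (Submodule A M)).unbotD 0

/-- `ℓ_A(M/N)` for ideals `N ⊆ M` of `A`. -/
def qlen {A : Type*} [CommRing A] (M N : Ideal A) : ℕ∞ :=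
  moduleLength A (↥M ⧸ (Submodule.comap M.subtype N))

/-- `ℓ_A(A/J)`. -/
def cyclen {A : Type*} [CommRing A] (J : Ideal A) : ℕ∞ :=
  moduleLength A (A ⧸ J)

/-- The depth of `M` with respect to the ideal `J`: the supremum of the lengths of
`M`-regular sequences consisting of elements of `J`. -/
def seqDepth {A : Type*} [CommRing A] (J : Ideal A) (M : Type*) [AddCommGroup M]
    [Module A M] : ℕ∞ :=
  sSup {n : ℕ∞ | ∃ rs : List A, (∀ r ∈ rs, r ∈ J) ∧
    RingTheory.Sequence.IsRegular M rs ∧ (rs.length : ℕ∞) = n}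

/-- The associated graded ring `G(I) = ⊕_{n ≥ 0} Iⁿ/Iⁿ⁺¹`, realized as `R(I)/I·R(I)`
where `R(I)` is the Rees algebra of `I`. -/
abbrev agr {A : Type*} [CommRing A] (I : Ideal A) : Type _ :=
  (reesAlgebra I) ⧸ (Ideal.map (algebraMap A (reesAlgebra I)) I)

/-- The irrelevant ideal `R(I)_+` of the Rees algebra, generated by the degree-one
elements `a·t`, `a ∈ I`. -/
def reesPlus {A : Type*} [CommRing A] (I : Ideal A) : Ideal (reesAlgebra I) :=
  Ideal.span {x | ∃ a ∈ I, (x : A[X]) = Polynomial.monomial 1 a}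

/-- The unique graded maximal ideal `m/I ⊕ ⊕_{n ≥ 1} Iⁿ/Iⁿ⁺¹` of the associated graded
ring `G(I)`. -/
def gMax {A : Type*} [CommRing A] (m I : Ideal A) : Ideal (agr I) :=
  Ideal.map (Ideal.Quotient.mk _) (Ideal.map (algebraMap A (reesAlgebra I)) m ⊔ reesPlus I)

/-- The index of nilpotency `n_I = min {n ≥ 0 | I^{n+1} ⊆ Q}`. -/
def nidx {A : Type*} [CommRing A] (I Q : Ideal A) : ℕ := sInf {n | I ^ (n + 1) ≤ Q}

/-- The reduction number `r_I = min {n ≥ 0 | I^{n+1} = Q·Iⁿ}`. -/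
def rnum {A : Type*} [CommRing A] (I Q : Ideal A) : ℕ := sInf {n | I ^ (n + 1) = Q * I ^ n}

/-- `I` is stretched with respect to `Q`: `Q ∩ I² = Q·I` and `ℓ_A((I²+Q)/(I³+Q)) = 1`. -/
def IsStretched {A : Type*} [CommRing A] (I Q : Ideal A) : Prop :=
  Q ⊓ I ^ 2 = Q * I ∧ qlen (I ^ 2 ⊔ Q) (I ^ 3 ⊔ Q) = 1

/-- The associated graded ring `G(I)` is Cohen-Macaulay: its depth with respect to the
graded maximal ideal equals its Krull dimension. -/
def agrCM {A : Type*} [CommRing A] (m I : Ideal A) : Prop :=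
  (seqDepth (A := agr I) (gMax m I) (agr I) : WithBot ℕ∞) = ringKrullDim (agr I)

/-!
Write `B k = Iᵏ + Q`. Stretchedness says that `B 3 ⋖ B 2`, so `B 2 = (uv) + B 3` for some
`u, v ∈ I`, and Nakayama gives `𝔪 · B 2 ⊆ B 3`. As `uI ⊆ I² ⊆ (uv) + B 3`, induction gives
`B k = (u vᵏ⁻¹) + B (k + 1)` with `𝔪 · u vᵏ⁻¹ ⊆ B (k + 1)`; for `2 ≤ k ≤ n_I` the inclusion is
strict (Nakayama again, since `Iᵏ ⊄ Q`), hence a covering. The `n_I - 1` layers between `B 2` and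
`B (n_I + 1) = Q` give `ℓ((I² + Q)/Q) = n_I - 1`, and `Q ∩ I² = QI` identifies `I²/QI` with
`(I² + Q)/Q`.
-/

section Length

variable {A : Type*} [CommRing A]

lemma moduleLength_eq_length (M : Type*) [AddCommGroup M] [Module A M] :
    moduleLength A M = Module.length A M := by
  rw [moduleLength, ← Module.coe_length, WithBot.unbotD_coe]

lemma qlen_self (M : Ideal A) : qlen M M = 0 := by
  rw [qlen, moduleLength_eq_length, Module.length_eq_zero_iff, Submodule.comap_subtype_self]
  infer_instance

lemma qlen_eq_one_iff {M N : Ideal A} (h : N ≤ M) : qlen M N = 1 ↔ N ⋖ M := by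
  rw [qlen, moduleLength_eq_length, Module.length_eq_one_iff, covBy_iff_quot_is_simple h]

lemma qlen_congr_inf {M N N' : Ideal A} (h : N ⊓ M = N' ⊓ M) : qlen M N = qlen M N' := by
  have key (P : Ideal A) : Submodule.comap M.subtype P = Submodule.comap M.subtype (P ⊓ M) := by
    rw [Submodule.comap_inf, Submodule.comap_subtype_self, inf_top_eq]
  rw [qlen, qlen, key N, h, ← key]

lemma qlen_sup_left (M N : Ideal A) : qlen (M ⊔ N) N = qlen M N := by
  have e := LinearMap.quotientInfEquivSupQuotient M N
  rw [Submodule.comap_subtype_self, top_inf_eq] at e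
  rw [qlen, qlen, moduleLength_eq_length, moduleLength_eq_length, e.length_eq]

lemma qlen_add {M N P : Ideal A} (hPN : P ≤ N) (hNM : N ≤ M) :
    qlen M P = qlen N P + qlen M N := by
  simp only [qlen, moduleLength_eq_length]
  have hcomap : Submodule.comap N.subtype P =
      Submodule.comap (Submodule.inclusion hNM) (Submodule.comap M.subtype P) := by
    rw [← Submodule.comap_comp, Submodule.subtype_comp_inclusion]
  refine Module.length_eq_add_of_exact (Submodule.mapQ _ _ _ hcomap.le)
    (Submodule.factor (Submodule.comap_mono hPN)) ?_ (Submodule.factor_surjective _) ?_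
  · rw [← LinearMap.ker_eq_bot, Submodule.ker_mapQ, ← hcomap, Submodule.mkQ_map_self]
  · rw [LinearMap.exact_iff, Submodule.range_mapQ, Submodule.range_inclusion, Submodule.factor,
      Submodule.ker_mapQ, Submodule.comap_id]

lemma qlen_eq_of_covBy_chain {B : ℕ → Ideal A} (hB : Antitone B)
    {n : ℕ} (h : ∀ i < n, B (i + 1) ⋖ B i) : qlen (B 0) (B n) = n := by
  induction n with
  | zero => exact qlen_self _
  | succ n ih =>
    rw [qlen_add (hB n.le_succ) (hB n.zero_le),
      (qlen_eq_one_iff (hB n.le_succ)).2 (h n n.lt_succ_self),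
      ih fun i hi => h i (hi.trans n.lt_succ_self), Nat.cast_succ, add_comm]

end Length

section Covering

variable {R M : Type*}

lemma CovBy.span_singleton_sup_eq [Semiring R] [AddCommMonoid M] [Module R M]
    {N P : Submodule R M} (h : N ⋖ P) {x : M} (hxP : x ∈ P) (hxN : x ∉ N) :
    R ∙ x ⊔ N = P :=
  (h.eq_or_eq le_sup_right
    (sup_le ((Submodule.span_singleton_le_iff_mem x P).2 hxP) h.le)).resolve_left
    fun heq => hxN (heq ▸ Submodule.mem_sup_left (Submodule.mem_span_singleton_self x))

variable [CommRing R] [IsLocalRing R] [AddCommGroup M] [Module R M]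

lemma CovBy.maximalIdeal_smul_le {N P : Submodule R M} (h : N ⋖ P) (hP : P.FG) :
    maximalIdeal R • P ≤ N := by
  have hle : N ⊔ maximalIdeal R • P ≤ P := sup_le h.le Submodule.smul_le_right
  rcases h.eq_or_eq le_sup_left hle with heq | heq
  · exact le_sup_right.trans heq.le
  · exact absurd (Submodule.le_of_le_smul_of_le_jacobson_bot hP (maximalIdeal_le_jacobson _)
      heq.ge) h.lt.not_ge

lemma covBy_span_singleton_sup {N : Submodule R M} {x : M} (hxN : x ∉ N)
    (hx : ∀ r ∈ maximalIdeal R, r • x ∈ N) : N ⋖ R ∙ x ⊔ N := by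
  refine ⟨right_lt_sup.2 fun h : R ∙ x ≤ N => hxN (h (Submodule.mem_span_singleton_self x)),
    fun S hNS hS => ?_⟩
  obtain ⟨y, hyS, hyN⟩ := SetLike.exists_of_lt hNS
  obtain ⟨_, hrx, z, hz, rfl⟩ := Submodule.mem_sup.1 (hS.le hyS)
  obtain ⟨r, rfl⟩ := Submodule.mem_span_singleton.1 hrx
  have hr : IsUnit r := by
    by_contra hr
    exact hyN (N.add_mem (hx r ((mem_maximalIdeal r).2 hr)) hz)
  have hxS : x ∈ S := by
    refine (Submodule.smul_mem_iff_of_isUnit S hr).1 ?_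
    simpa using S.sub_mem hyS (hNS.le hz)
  exact hS.not_ge (sup_le ((Submodule.span_singleton_le_iff_mem x S).2 hxS) hNS.le)

end Covering

section Stretched

variable {A : Type*} [CommRing A] {I Q : Ideal A}

lemma mul_pow_sup_le {J : Ideal A} {k : ℕ} (hJ : J ≤ I ^ k) (n : ℕ) :
    J * (I ^ n ⊔ Q) ≤ I ^ (k + n) ⊔ Q := by
  rw [Ideal.mul_sup, pow_add]
  exact sup_le_sup (Ideal.mul_mono_left hJ) Ideal.mul_le_right

lemma pow_le_span_mul_pow_sup {u v : A} (hu : u ∈ I) (hv : v ∈ I)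
    (h : I ^ 2 ≤ Ideal.span {u * v} ⊔ (I ^ 3 ⊔ Q)) (j : ℕ) :
    I ^ (j + 2) ≤ Ideal.span {u * v ^ (j + 1)} ⊔ (I ^ (j + 3) ⊔ Q) := by
  induction j with
  | zero => simpa using h
  | succ j ih =>
    have hvj : Ideal.span {v ^ (j + 1)} ≤ I ^ (j + 1) :=
      Ideal.span_le.2 (Set.singleton_subset_iff.2 (Ideal.pow_mem_pow hv _))
    have huI : Ideal.span {u} * I ≤ I ^ 2 := by
      rw [pow_two]; exact Ideal.mul_mono_left (Ideal.span_le.2 (Set.singleton_subset_iff.2 hu))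
    calc I ^ (j + 1 + 2) = I ^ (j + 2) * I := pow_succ I (j + 2)
      _ ≤ (Ideal.span {u * v ^ (j + 1)} ⊔ (I ^ (j + 3) ⊔ Q)) * I := Ideal.mul_mono_left ih
      _ = Ideal.span {v ^ (j + 1)} * (Ideal.span {u} * I) ⊔ I * (I ^ (j + 3) ⊔ Q) := by
        rw [Ideal.sup_mul, mul_comm (I ^ (j + 3) ⊔ Q), ← mul_assoc,
          Ideal.span_singleton_mul_span_singleton, mul_comm u]
      _ ≤ Ideal.span {v ^ (j + 1)} * (Ideal.span {u * v} ⊔ (I ^ 3 ⊔ Q)) ⊔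
          (I ^ (1 + (j + 3)) ⊔ Q) :=
        sup_le_sup (Ideal.mul_mono_right (huI.trans h)) (mul_pow_sup_le (pow_one I).ge _)
      _ ≤ Ideal.span {u * v ^ (j + 1 + 1)} ⊔ (I ^ (j + 1 + 3) ⊔ Q) := by
        rw [Ideal.mul_sup, Ideal.span_singleton_mul_span_singleton,
          show v ^ (j + 1) * (u * v) = u * v ^ (j + 1 + 1) by ring, add_comm 1 (j + 3)]
        exact sup_le (sup_le_sup_left (mul_pow_sup_le hvj 3) _) le_sup_right

lemma pow_nidx_succ_le (hred : ∃ n, I ^ (n + 1) = Q * I ^ n) : I ^ (nidx I Q + 1) ≤ Q :=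
  Nat.sInf_mem (s := {n | I ^ (n + 1) ≤ Q}) (hred.imp fun _ hn => hn.trans_le Ideal.mul_le_left)

lemma not_pow_succ_le_of_lt_nidx {k : ℕ} (hk : k < nidx I Q) : ¬ I ^ (k + 1) ≤ Q :=
  Nat.notMem_of_lt_sInf hk

lemma IsStretched.covBy (hstr : IsStretched I Q) : I ^ 3 ⊔ Q ⋖ I ^ 2 ⊔ Q :=
  (qlen_eq_one_iff (sup_le_sup_right (Ideal.pow_le_pow_right (by norm_num)) Q)).1 hstr.2

lemma IsStretched.not_pow_two_le (hstr : IsStretched I Q) : ¬ I ^ 2 ≤ Q := fun h =>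
  hstr.covBy.lt.not_ge (sup_le (h.trans le_sup_right) le_sup_right)

lemma IsStretched.exists_pow_two_le_span_mul_sup (hstr : IsStretched I Q) :
    ∃ u ∈ I, ∃ v ∈ I, I ^ 2 ≤ Ideal.span {u * v} ⊔ (I ^ 3 ⊔ Q) := by
  obtain ⟨u, hu, v, hv, huv⟩ : ∃ u ∈ I, ∃ v ∈ I, u * v ∉ I ^ 3 ⊔ Q := by
    by_contra! h
    exact hstr.covBy.lt.not_ge (sup_le (pow_two I ▸ Ideal.mul_le.2 h) le_sup_right)
  refine ⟨u, hu, v, hv, le_sup_left.trans (hstr.covBy.span_singleton_sup_eq ?_ huv).ge⟩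
  exact Ideal.mem_sup_left (pow_two I ▸ Ideal.mul_mem_mul hu hv)

variable [IsLocalRing A] [IsNoetherianRing A]

lemma IsStretched.covBy_pow_sup (hstr : IsStretched I Q) (hI : I ≤ maximalIdeal A) (j : ℕ)
    (hj : ¬ I ^ (j + 2) ≤ Q) : I ^ (j + 3) ⊔ Q ⋖ I ^ (j + 2) ⊔ Q := by
  obtain ⟨u, hu, v, hv, huv⟩ := hstr.exists_pow_two_le_span_mul_sup
  have hxI : u * v ^ (j + 1) ∈ I ^ (j + 2) := by
    rw [pow_succ']; exact Ideal.mul_mem_mul hu (Ideal.pow_mem_pow hv _)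
  have hgen : Ideal.span {u * v ^ (j + 1)} ⊔ (I ^ (j + 3) ⊔ Q) = I ^ (j + 2) ⊔ Q :=
    le_antisymm
      (sup_le (Ideal.span_le.2 (Set.singleton_subset_iff.2 (Ideal.mem_sup_left hxI)))
        (sup_le_sup_right (Ideal.pow_le_pow_right (by omega)) Q))
      (sup_le (pow_le_span_mul_pow_sup hu hv huv j) (le_sup_right.trans le_sup_right))
  have hxm : ∀ r ∈ maximalIdeal A, r * (u * v ^ (j + 1)) ∈ I ^ (j + 3) ⊔ Q := by
    intro r hr
    have hruv : r * (u * v) ∈ I ^ 3 ⊔ Q :=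
      hstr.covBy.maximalIdeal_smul_le (IsNoetherian.noetherian _)
        (Submodule.smul_mem_smul hr (Ideal.mem_sup_left (pow_two I ▸ Ideal.mul_mem_mul hu hv)))
    have hvj : Ideal.span {v ^ j} ≤ I ^ j :=
      Ideal.span_le.2 (Set.singleton_subset_iff.2 (Ideal.pow_mem_pow hv _))
    have := mul_pow_sup_le hvj 3 (Ideal.mul_mem_mul (Ideal.mem_span_singleton_self _) hruv)
    rwa [show v ^ j * (r * (u * v)) = r * (u * v ^ (j + 1)) by ring] at this
  have hxN : u * v ^ (j + 1) ∉ I ^ (j + 3) ⊔ Q := by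
    intro hx
    refine hj (Submodule.le_of_le_smul_of_le_jacobson_bot (IsNoetherian.noetherian _)
      (hI.trans (maximalIdeal_le_jacobson _)) ?_)
    rw [sup_comm, Ideal.smul_eq_mul, ← pow_succ']
    calc I ^ (j + 2) ≤ I ^ (j + 2) ⊔ Q := le_sup_left
      _ = Ideal.span {u * v ^ (j + 1)} ⊔ (I ^ (j + 3) ⊔ Q) := hgen.symm
      _ ≤ I ^ (j + 3) ⊔ Q := sup_le (Ideal.span_le.2 (Set.singleton_subset_iff.2 hx)) le_rfl
  rw [← hgen]
  exact covBy_span_singleton_sup hxN hxm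

end Stretched

theorem stretched_alpha_one_eq_nidx_sub_one_general {A : Type*} [CommRing A] [IsLocalRing A] [IsNoetherianRing A]
    (I Q : Ideal A) (hIm : I.radical = maximalIdeal A)
    (hred : ∃ n, I ^ (n + 1) = Q * I ^ n)
    (hstr : IsStretched I Q) :
    qlen (I ^ 2) (Q * I ^ 1) = qlen (I ^ 2 ⊔ Q) Q ∧
    qlen (I ^ 2) (Q * I ^ 1) = ((nidx I Q - 1 : ℕ) : ℕ∞) := by
  have hα : qlen (I ^ 2) (Q * I ^ 1) = qlen (I ^ 2 ⊔ Q) Q := by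
    rw [qlen_sup_left, qlen_congr_inf (N' := Q) (by rw [pow_one, ← hstr.1, inf_assoc, inf_idem])]
  refine ⟨hα, hα.trans ?_⟩
  have hnidx := pow_nidx_succ_le hred
  have hpos : 1 ≤ nidx I Q := by
    by_contra! h
    rw [Nat.lt_one_iff.1 h] at hnidx
    exact hstr.not_pow_two_le ((Ideal.pow_le_pow_right (by norm_num)).trans hnidx)
  have hchain := qlen_eq_of_covBy_chain (B := fun i => I ^ (i + 2) ⊔ Q)
    (fun i j hij => sup_le_sup_right (Ideal.pow_le_pow_right (by omega)) Q) (n := nidx I Q - 1)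
    fun i hi => hstr.covBy_pow_sup (hIm ▸ I.le_radical) i
      (not_pow_succ_le_of_lt_nidx (by omega))
  simpa only [zero_add, show nidx I Q - 1 + 2 = nidx I Q + 1 by omega, sup_eq_right.2 hnidx]
    using hchain

theorem stretched_alpha_one_eq_nidx_sub_one {A : Type*} [CommRing A] [IsLocalRing A] [IsNoetherianRing A]
    [Infinite (ResidueField A)]
    (d : ℕ) (hd : 0 < d) (hdim : ringKrullDim A = d)
    (hCMring : seqDepth (maximalIdeal A) A = d)
    (I Q : Ideal A) (hIm : I.radical = maximalIdeal A)
    (a : Fin d → A) (hQa : Q = Ideal.span (Set.range a))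
    (hQI : Q ≤ I) (hred : ∃ n, I ^ (n + 1) = Q * I ^ n)
    (hstr : IsStretched I Q) :
    qlen (I ^ 2) (Q * I ^ 1) = qlen (I ^ 2 ⊔ Q) Q ∧
    qlen (I ^ 2) (Q * I ^ 1) = ((nidx I Q - 1 : ℕ) : ℕ∞) :=
  stretched_alpha_one_eq_nidx_sub_one_general I Q hIm hred hstr
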